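/- arXiv:1509.06896 — 3 statements merged into one kernel-verified Lean document; each statement's English description precedes it below -/
import Mathlib

section
/- Let H be a complex Hilbert space of dimension at least 2, and let A = |0⟩⟨0| and B = |+⟩⟨+| where |0⟩, |1⟩ are orthonormal and |+⟩ = (|0⟩+|1⟩)/√2. There is no self-adjoint operator K on H such that K, A − K, B − K, and I − A − B + K are all positive semidefinite. -/
open scoped InnerProductSpace

/-- The rank-1 projection `|v⟩⟨v|` onto the span of a unit vector `v`. -/
noncomputable def outerProj {H : Type*} [NormedAddCommGroup H] [InnerProductSpace ℂ H]
    (v : H) : H →L[ℂ] H :=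
  (innerSL ℂ v).smulRight v

theorem stmt7 {H : Type*} [NormedAddCommGroup H] [InnerProductSpace ℂ H]
    (e0 e1 : H) (h0 : ‖e0‖ = 1) (h1 : ‖e1‖ = 1) (h01 : ⟪e0, e1⟫_ℂ = 0) :
    ¬ ∃ K : H →L[ℂ] H,
      (∀ x y, ⟪K x, y⟫_ℂ = ⟪x, K y⟫_ℂ) ∧
      (∀ ψ, 0 ≤ (⟪ψ, K ψ⟫_ℂ).re) ∧
      (∀ ψ, 0 ≤ (⟪ψ, (outerProj e0 - K) ψ⟫_ℂ).re) ∧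
      (∀ ψ, 0 ≤ (⟪ψ, (outerProj (((Real.sqrt 2 : ℝ) : ℂ)⁻¹ • (e0 + e1)) - K) ψ⟫_ℂ).re) ∧
      (∀ ψ, 0 ≤ (⟪ψ,
        ((1 : H →L[ℂ] H) - outerProj e0
          - outerProj (((Real.sqrt 2 : ℝ) : ℂ)⁻¹ • (e0 + e1)) + K) ψ⟫_ℂ).re) := by
  rintro ⟨K, hsa, hK, hA, hB, hI⟩
  have he00 : ⟪e0, e0⟫_ℂ = 1 := by
    rw [inner_self_eq_norm_sq_to_K, h0]; norm_num
  have he11 : ⟪e1, e1⟫_ℂ = 1 := by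
    rw [inner_self_eq_norm_sq_to_K, h1]; norm_num
  have he10 : ⟪e1, e0⟫_ℂ = 0 := by
    rw [← inner_conj_symm, h01, map_zero]
  have hc : ⟪e1, K e0⟫_ℂ = starRingEnd ℂ ⟪e0, K e1⟫_ℂ := by
    rw [← hsa, inner_conj_symm]
  set α : ℝ := (⟪e0, K e0⟫_ℂ).re with hα
  set β : ℝ := (⟪e1, K e1⟫_ℂ).re with hβ
  set g : ℝ := (⟪e0, K e1⟫_ℂ).re with hg
  -- β ≤ 0 from A - K ≥ 0 at e1
  have hb1 : β ≤ 0 := by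
    have := hA e1
    simp only [outerProj, ContinuousLinearMap.sub_apply,
      ContinuousLinearMap.smulRight_apply, innerSL_apply_apply, h01,
      zero_smul, zero_sub, inner_neg_right, Complex.neg_re] at this
    linarith
  have hb2 : 0 ≤ β := hK e1
  -- α - 2g + β ≤ 0 from B - K ≥ 0 at e0 - e1
  have hm1 : α - 2*g + β ≤ 0 := by
    have := hB (e0 - e1)
    simp only [outerProj, ContinuousLinearMap.sub_apply,
      ContinuousLinearMap.smulRight_apply, innerSL_apply_apply,
      inner_add_left, inner_add_right, inner_sub_left, inner_sub_right,
      inner_smul_left, inner_smul_right, inner_neg_right,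
      he00, he11, he10, h01, map_sub, hc, Complex.conj_conj,
      add_zero, zero_add, sub_zero, zero_sub, sub_self, mul_zero, mul_one,
      zero_smul, smul_zero, inner_zero_right, neg_zero, smul_smul] at this
    simp only [Complex.sub_re, Complex.add_re, Complex.zero_re, Complex.neg_re,
      Complex.conj_re] at this
    linarith
  -- α + 2g + β ≥ 1 from I - A - B + K ≥ 0 at e0 + e1
  have hsq : ((Real.sqrt 2 : ℝ) : ℂ)⁻¹ * starRingEnd ℂ ((Real.sqrt 2 : ℝ) : ℂ)⁻¹ = 1/2 := by
    rw [map_inv₀, Complex.conj_ofReal]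
    rw [← mul_inv]
    norm_cast
    rw [Real.mul_self_sqrt (by norm_num)]
    norm_num
  have hm2 : 1 ≤ α + 2*g + β := by
    have := hI (e0 + e1)
    simp only [outerProj, ContinuousLinearMap.add_apply, ContinuousLinearMap.sub_apply,
      ContinuousLinearMap.one_apply, ContinuousLinearMap.smulRight_apply, innerSL_apply_apply,
      inner_add_left, inner_add_right, inner_sub_left, inner_sub_right,
      inner_smul_left, inner_smul_right,
      he00, he11, he10, h01, map_add, hc, one_smul, zero_smul, smul_smul,
      Complex.conj_conj, mul_one, mul_zero, add_zero, zero_add, sub_zero,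
      zero_mul, one_mul, zero_sub, sub_self] at this
    rw [show (starRingEnd ℂ) ((Real.sqrt 2:ℝ):ℂ)⁻¹ * ((Real.sqrt 2:ℝ):ℂ)⁻¹ = 1/2 from
      (mul_comm _ _).trans hsq] at this
    simp only [inner_neg_right, inner_smul_right, inner_add_right, he00, he11, he10, h01,
      Complex.add_re, Complex.sub_re, Complex.neg_re, Complex.mul_re, Complex.one_re,
      Complex.one_im, Complex.zero_re, Complex.zero_im, Complex.conj_re, Complex.conj_im,
      Complex.ofReal_re, Complex.ofReal_im, Complex.div_re, Complex.div_im,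
      Complex.normSq_mk] at this
    norm_num at this
    linarith
  -- α - 4g + 4β ≥ 0 from K ≥ 0 at e0 - 2e1
  have hm3 : 0 ≤ α - 4*g + 4*β := by
    have := hK (e0 - (2:ℂ) • e1)
    simp only [map_sub, map_smul, inner_sub_left, inner_sub_right,
      inner_smul_left, inner_smul_right, hc,
      Complex.sub_re, Complex.add_re, Complex.mul_re, Complex.conj_re, Complex.conj_im] at this
    norm_num at this
    linarith
  linarith
end

section
/- There is no quadruple of measurable functions A : Λ → ℝ³, B : Λ → ℝ³, C : Λ → ℝ (with respect to a measure space (Λ, μ)) satisfying: ‖B(λ)‖ ≤ 1 and ‖A(λ)‖ ≤ C(λ) for all λ; ∫ Bᵢ Aⱼ dμ = δᵢⱼ for all i, j ∈ {1,2,3}; and ∫ C dμ = 1. -/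
open MeasureTheory

/-
Summing the diagonal relations gives `∫ ⟪B, A⟫ dμ = 3`, while Cauchy–Schwarz bounds the integrand
pointwise by `‖B‖ ‖A‖ ≤ C`, whose integral is `1`.
-/

theorem EuclideanSpace.sum_mul_le_norm_mul_norm {ι : Type*} [Fintype ι]
    (x y : EuclideanSpace ℝ ι) : ∑ i, x i * y i ≤ ‖x‖ * ‖y‖ := by
  calc ∑ i, x i * y i = inner ℝ x y := by simp [PiLp.inner_apply, mul_comm]
    _ ≤ ‖x‖ * ‖y‖ := real_inner_le_norm x y

theorem card_le_integral_of_integral_diag_eq_one {ι Λ : Type*} [Fintype ι] [MeasurableSpace Λ]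
    {μ : Measure Λ} {A B : Λ → EuclideanSpace ℝ ι} {C : Λ → ℝ}
    (hB : ∀ l, ‖B l‖ ≤ 1) (hAC : ∀ l, ‖A l‖ ≤ C l)
    (hint : ∀ i, Integrable (fun l => B l i * A l i) μ)
    (hdiag : ∀ i, ∫ l, B l i * A l i ∂μ = 1) (hC : Integrable C μ) :
    (Fintype.card ι : ℝ) ≤ ∫ l, C l ∂μ := by
  have hsum : ∫ l, ∑ i, B l i * A l i ∂μ = Fintype.card ι := by
    rw [integral_finsetSum _ fun i _ => hint i]
    simp [hdiag]
  rw [← hsum]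
  refine integral_mono (integrable_finsetSum _ fun i _ => hint i) hC fun l => ?_
  calc ∑ i, B l i * A l i ≤ ‖B l‖ * ‖A l‖ := EuclideanSpace.sum_mul_le_norm_mul_norm _ _
    _ ≤ 1 * C l := mul_le_mul (hB l) (hAC l) (norm_nonneg _) zero_le_one
    _ = C l := one_mul _

theorem stmt12 {Λ : Type*} [MeasurableSpace Λ] (μ : Measure Λ) :
    ¬ ∃ (A B : Λ → EuclideanSpace ℝ (Fin 3)) (C : Λ → ℝ),
      Measurable A ∧ Measurable B ∧ Measurable C ∧
      (∀ l, ‖B l‖ ≤ 1) ∧ (∀ l, ‖A l‖ ≤ C l) ∧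
      (∀ i j : Fin 3, Integrable (fun l => B l i * A l j) μ) ∧
      (∀ i j : Fin 3, ∫ l, B l i * A l j ∂μ = if i = j then 1 else 0) ∧
      Integrable C μ ∧ (∫ l, C l ∂μ = 1) := by
  rintro ⟨A, B, C, -, -, -, hB, hAC, hint, hδ, hC, hC1⟩
  have h3 := card_le_integral_of_integral_diag_eq_one hB hAC (fun i => hint i i)
    (fun i => by simpa using hδ i i) hC
  rw [hC1] at h3
  norm_num at h3
end

section
/- Let v be a function assigning to every rank-1 orthogonal projection P on a finite-dimensional complex Hilbert space H of dimension n ≥ 2 a value v(P) ∈ {0,1}, such that for every orthonormal basis e₁,…,eₙ of H, exactly one of v(|e₁⟩⟨e₁|),…,v(|eₙ⟩⟨eₙ|) equals 1. Then: (a) if v(|φ⟩⟨φ|) = 1 and ψ ⊥ φ are unit vectors, then v(|ψ⟩⟨ψ|) = 0; and (b) if n ≥ 3 and v(|ψ₁⟩⟨ψ₁|) = v(|ψ₂⟩⟨ψ₂|) = 0 for orthonormal ψ₁, ψ₂, then v(|ψ⟩⟨ψ|) = 0 for every unit vector ψ in the span of ψ₁ and ψ₂. -/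
open scoped InnerProductSpace

/-! (a) Extend `φ, ψ` to an orthonormal basis: the value 1 sits at exactly one basis vector, so
it cannot sit at `ψ` as well as at `φ`. (b) Extend `ψ₁, ψ₂` to an orthonormal basis: its value 1
sits at a vector `χ` orthogonal to `ψ₁` and `ψ₂`, hence to `a • ψ₁ + b • ψ₂`, and (a) applies to
`χ`. -/

theorem exists_orthonormalBasis_apply_eq_pair {𝕜 E ι : Type*} [RCLike 𝕜]
    [NormedAddCommGroup E] [InnerProductSpace 𝕜 E] [FiniteDimensional 𝕜 E] [Fintype ι]
    (card_ι : Module.finrank 𝕜 E = Fintype.card ι) {i j : ι} (hij : i ≠ j) {x y : E}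
    (hx : ‖x‖ = 1) (hy : ‖y‖ = 1) (hxy : ⟪x, y⟫_𝕜 = 0) :
    ∃ b : OrthonormalBasis ι 𝕜 E, b i = x ∧ b j = y := by
  classical
  let f : ι → E := Function.update (fun _ => y) i x
  have hf : Orthonormal 𝕜 (({i, j} : Set ι).domRestrict f) := by
    rw [orthonormal_iff_ite]
    rintro ⟨k, hk | rfl⟩ ⟨l, hl | rfl⟩ <;> subst_vars <;>
      simp [f, Subtype.ext_iff, hij, hij.symm, inner_self_eq_norm_sq_to_K, hx, hy, hxy,
        inner_eq_zero_symm.mp hxy]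
  obtain ⟨b, hb⟩ := hf.exists_orthonormalBasis_extension_of_card_eq card_ι
  exact ⟨b, by simpa [f] using hb i (by simp), by simpa [f, hij.symm] using hb j (by simp)⟩

theorem exists_orthonormalBasis_fin_finrank_apply_eq_pair {𝕜 E : Type*} [RCLike 𝕜]
    [NormedAddCommGroup E] [InnerProductSpace 𝕜 E] [FiniteDimensional 𝕜 E]
    (hdim : 2 ≤ Module.finrank 𝕜 E) {x y : E} (hx : ‖x‖ = 1) (hy : ‖y‖ = 1)
    (hxy : ⟪x, y⟫_𝕜 = 0) :
    ∃ (b : OrthonormalBasis (Fin (Module.finrank 𝕜 E)) 𝕜 E) (i j : Fin (Module.finrank 𝕜 E)),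
      i ≠ j ∧ b i = x ∧ b j = y := by
  obtain ⟨i, j, hij⟩ := Fintype.one_lt_card_iff.mp
    (by rw [Fintype.card_fin]; exact hdim : 1 < Fintype.card (Fin (Module.finrank 𝕜 E)))
  obtain ⟨b, hbi, hbj⟩ := exists_orthonormalBasis_apply_eq_pair
    (Fintype.card_fin _).symm hij hx hy hxy
  exact ⟨b, i, j, hij, hbi, hbj⟩

section

variable {H : Type*} [NormedAddCommGroup H] [InnerProductSpace ℂ H] [FiniteDimensional ℂ H]
  {v : (H →L[ℂ] H) → ℝ}

theorem eq_zero_of_inner_eq_zero_of_eq_one (hdim : 2 ≤ Module.finrank ℂ H)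
    (hv01 : ∀ ψ : H, ‖ψ‖ = 1 → v (outerProj ψ) = 0 ∨ v (outerProj ψ) = 1)
    (hbasis : ∀ b : OrthonormalBasis (Fin (Module.finrank ℂ H)) ℂ H,
      ∃! i, v (outerProj (b i)) = 1) {φ ψ : H} (hφ : ‖φ‖ = 1) (hψ : ‖ψ‖ = 1)
    (hφψ : ⟪φ, ψ⟫_ℂ = 0) (hvφ : v (outerProj φ) = 1) : v (outerProj ψ) = 0 := by
  refine (hv01 ψ hψ).resolve_right fun hvψ => ?_
  obtain ⟨b, i, j, hij, rfl, rfl⟩ :=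
    exists_orthonormalBasis_fin_finrank_apply_eq_pair hdim hφ hψ hφψ
  exact hij ((hbasis b).unique hvφ hvψ)

theorem exists_eq_one_orthogonal_of_eq_zero (hdim : 2 ≤ Module.finrank ℂ H)
    (hbasis : ∀ b : OrthonormalBasis (Fin (Module.finrank ℂ H)) ℂ H,
      ∃! i, v (outerProj (b i)) = 1) {ψ₁ ψ₂ : H} (h₁ : ‖ψ₁‖ = 1) (h₂ : ‖ψ₂‖ = 1)
    (h₁₂ : ⟪ψ₁, ψ₂⟫_ℂ = 0) (hv₁ : v (outerProj ψ₁) = 0) (hv₂ : v (outerProj ψ₂) = 0) :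
    ∃ χ : H, ‖χ‖ = 1 ∧ ⟪χ, ψ₁⟫_ℂ = 0 ∧ ⟪χ, ψ₂⟫_ℂ = 0 ∧ v (outerProj χ) = 1 := by
  obtain ⟨b, i, j, -, rfl, rfl⟩ :=
    exists_orthonormalBasis_fin_finrank_apply_eq_pair hdim h₁ h₂ h₁₂
  obtain ⟨k, hk, -⟩ := hbasis b
  have hki : k ≠ i := by rintro rfl; simp [hv₁] at hk
  have hkj : k ≠ j := by rintro rfl; simp [hv₂] at hk
  exact ⟨b k, b.orthonormal.1 k, b.orthonormal.2 hki, b.orthonormal.2 hkj, hk⟩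

end

theorem stmt15 {H : Type*} [NormedAddCommGroup H] [InnerProductSpace ℂ H]
    [FiniteDimensional ℂ H] (hdim : 2 ≤ Module.finrank ℂ H)
    (v : (H →L[ℂ] H) → ℝ)
    (hv01 : ∀ ψ : H, ‖ψ‖ = 1 → v (outerProj ψ) = 0 ∨ v (outerProj ψ) = 1)
    (hbasis : ∀ b : OrthonormalBasis (Fin (Module.finrank ℂ H)) ℂ H,
      ∃! i, v (outerProj (b i)) = 1) :
    (∀ φ ψ : H, ‖φ‖ = 1 → ‖ψ‖ = 1 → ⟪φ, ψ⟫_ℂ = 0 →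
      v (outerProj φ) = 1 → v (outerProj ψ) = 0) ∧
    (3 ≤ Module.finrank ℂ H →
      ∀ ψ₁ ψ₂ : H, ‖ψ₁‖ = 1 → ‖ψ₂‖ = 1 → ⟪ψ₁, ψ₂⟫_ℂ = 0 →
      v (outerProj ψ₁) = 0 → v (outerProj ψ₂) = 0 →
      ∀ a b : ℂ, ‖a • ψ₁ + b • ψ₂‖ = 1 →
        v (outerProj (a • ψ₁ + b • ψ₂)) = 0) := by
  refine ⟨fun _ _ => eq_zero_of_inner_eq_zero_of_eq_one hdim hv01 hbasis,
    fun _ ψ₁ ψ₂ h₁ h₂ h₁₂ hv₁ hv₂ a b hab => ?_⟩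
  obtain ⟨χ, hχ, hχ₁, hχ₂, hvχ⟩ :=
    exists_eq_one_orthogonal_of_eq_zero hdim hbasis h₁ h₂ h₁₂ hv₁ hv₂
  exact eq_zero_of_inner_eq_zero_of_eq_one hdim hv01 hbasis hχ hab
    (by simp only [inner_add_right, inner_smul_right, hχ₁, hχ₂, mul_zero, add_zero]) hvχ
end
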